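/- arXiv:2510.05036 — 3 statements merged into one kernel-verified Lean document; each statement's English description precedes it below -/
import Mathlib

section
/- Let L be a real symmetric positive semidefinite N×N matrix, γ > 0, L_γ = L + γI, c̄ > 0, σ > 0, α ≥ 0, and set H = exp(−c̄·L_γ) and Σ = σ²·(I − exp(−2c̄·L_γ))·L_γ⁻¹. Then the matrix Hᵀ·Σ⁻¹·H + α·L is positive definite (hence invertible), and for every vector x_t ∈ ℝᴺ the function F(x) = (x_t − H·x)ᵀ·Σ⁻¹·(x_t − H·x) + α·xᵀ·L·x attains a unique global minimum over ℝᴺ at x̂ = (Hᵀ·Σ⁻¹·H + α·L)⁻¹·Hᵀ·Σ⁻¹·x_t. -/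
open Matrix

section Helpers

variable {n : Type*} [Fintype n] [DecidableEq n]

lemma symmDot {A : Matrix n n ℝ} (hA : Aᵀ = A) (x y : n → ℝ) :
    x ⬝ᵥ (A *ᵥ y) = y ⬝ᵥ (A *ᵥ x) := by
  rw [Matrix.dotProduct_mulVec, ← Matrix.vecMul_transpose, hA, dotProduct_comm]

lemma mulVecDot (A : Matrix n n ℝ) (x y : n → ℝ) :
    (A *ᵥ x) ⬝ᵥ y = x ⬝ᵥ (Aᵀ *ᵥ y) := by
  rw [Matrix.dotProduct_mulVec, Matrix.vecMul_transpose]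

lemma posDefSmul {A : Matrix n n ℝ} (hA : A.PosDef) {c : ℝ} (hc : 0 < c) :
    (c • A).PosDef := by
  refine Matrix.PosDef.of_dotProduct_mulVec_pos ?_ fun x hx => ?_
  · unfold Matrix.IsHermitian at *
    rw [Matrix.conjTranspose_smul, hA.1.eq]
    simp
  · rw [Matrix.smul_mulVec, dotProduct_smul]
    exact smul_pos hc (hA.dotProduct_mulVec_pos hx)

lemma posSemidefSmul {A : Matrix n n ℝ} (hA : A.PosSemidef) {c : ℝ} (hc : 0 ≤ c) :
    (c • A).PosSemidef := by
  refine Matrix.PosSemidef.of_dotProduct_mulVec_nonneg ?_ fun x => ?_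
  · unfold Matrix.IsHermitian at *
    rw [Matrix.conjTranspose_smul, hA.1.eq]
    simp
  · rw [Matrix.smul_mulVec, dotProduct_smul]
    exact smul_nonneg hc (hA.dotProduct_mulVec_nonneg x)

lemma posDefConj {A B : Matrix n n ℝ} (hA : A.PosDef) (hB : IsUnit B) :
    (Bᵀ * A * B).PosDef := by
  refine Matrix.PosDef.of_dotProduct_mulVec_pos ?_ fun x hx => ?_
  · have h := Matrix.isHermitian_conjTranspose_mul_mul B hA.1
    rwa [Matrix.conjTranspose_eq_transpose_of_trivial] at h
  · have hBx : B *ᵥ x ≠ 0 := fun h => hx ((Matrix.mulVec_injective_iff_isUnit.2 hB).eq_iff.mp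
      (by rw [h, Matrix.mulVec_zero]))
    have key : star x ⬝ᵥ ((Bᵀ * A * B) *ᵥ x) = star (B *ᵥ x) ⬝ᵥ (A *ᵥ (B *ᵥ x)) := by
      simp only [star_trivial]
      rw [← Matrix.mulVec_mulVec, ← Matrix.mulVec_mulVec, Matrix.dotProduct_mulVec,
        Matrix.vecMul_transpose]
    rw [key]
    exact hA.dotProduct_mulVec_pos hBx

lemma quadMin {M : Matrix n n ℝ} (hM : M.PosDef) (hMs : Mᵀ = M) (b x y : n → ℝ)
    (hy : M *ᵥ y = b) (hne : x ≠ y) :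
    y ⬝ᵥ (M *ᵥ y) - 2 * (b ⬝ᵥ y) < x ⬝ᵥ (M *ᵥ x) - 2 * (b ⬝ᵥ x) := by
  have hd : x - y ≠ 0 := sub_ne_zero.mpr hne
  have hpos : 0 < (x - y) ⬝ᵥ (M *ᵥ (x - y)) := by
    have := hM.dotProduct_mulVec_pos hd
    simpa using this
  have h1 : y ⬝ᵥ (M *ᵥ x) = x ⬝ᵥ (M *ᵥ y) := symmDot hMs y x
  have h2 : x ⬝ᵥ (M *ᵥ y) = x ⬝ᵥ b := by rw [hy]
  have h3 : b ⬝ᵥ x = x ⬝ᵥ b := dotProduct_comm _ _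
  have h4 : b ⬝ᵥ y = y ⬝ᵥ (M *ᵥ y) := by rw [← hy]; exact dotProduct_comm _ _
  have hexp : (x - y) ⬝ᵥ (M *ᵥ (x - y))
      = (x ⬝ᵥ (M *ᵥ x) - 2 * (b ⬝ᵥ x)) - (y ⬝ᵥ (M *ᵥ y) - 2 * (b ⬝ᵥ y)) := by
    rw [Matrix.mulVec_sub, dotProduct_sub, sub_dotProduct,
      sub_dotProduct, h1, h2, h3, h4]
    ring
  linarith

end Helpers

/-- Let `L` be a real symmetric positive semidefinite `N×N` matrix, `γ > 0`,
`L_γ = L + γI`, `c̄ > 0`, `σ > 0`, `α ≥ 0`, and set `H = exp(−c̄·L_γ)` and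
`Σ = σ²·(I − exp(−2c̄·L_γ))·L_γ⁻¹`. Then the matrix `Hᵀ·Σ⁻¹·H + α·L` is positive definite
(hence invertible), and for every vector `x_t ∈ ℝᴺ` the function
`F(x) = (x_t − H·x)ᵀ·Σ⁻¹·(x_t − H·x) + α·xᵀ·L·x` attains a unique global minimum over `ℝᴺ`
at `x̂ = (Hᵀ·Σ⁻¹·H + α·L)⁻¹·Hᵀ·Σ⁻¹·x_t`. -/
theorem denoising_objective_unique_minimizer
    (N : ℕ) (hN : 1 ≤ N) (L : Matrix (Fin N) (Fin N) ℝ) (hL : L.PosSemidef)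
    (γ cbar σ α : ℝ) (hγ : 0 < γ) (hcbar : 0 < cbar) (hσ : 0 < σ) (hα : 0 ≤ α)
    (Lγ H Sig : Matrix (Fin N) (Fin N) ℝ) (hLγ : Lγ = L + γ • 1)
    (hH : H = NormedSpace.exp ((-cbar) • Lγ))
    (hSig : Sig = σ ^ 2 • ((1 - NormedSpace.exp ((-(2 * cbar)) • Lγ)) * Lγ⁻¹))
    (F : (Fin N → ℝ) → (Fin N → ℝ) → ℝ)
    (hF : ∀ xt x, F xt x =
      (xt - H *ᵥ x) ⬝ᵥ (Sig⁻¹ *ᵥ (xt - H *ᵥ x)) + α * (x ⬝ᵥ (L *ᵥ x))) :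
    (Hᵀ * Sig⁻¹ * H + α • L).PosDef ∧ IsUnit (Hᵀ * Sig⁻¹ * H + α • L) ∧
      ∀ xt : Fin N → ℝ,
        ∀ x : Fin N → ℝ,
          x ≠ ((Hᵀ * Sig⁻¹ * H + α • L)⁻¹ * Hᵀ * Sig⁻¹) *ᵥ xt →
          F xt (((Hᵀ * Sig⁻¹ * H + α • L)⁻¹ * Hᵀ * Sig⁻¹) *ᵥ xt) < F xt x := by
  -- Positive definiteness of Lγ
  have hLγpd : Lγ.PosDef := by
    rw [hLγ]
    exact Matrix.PosDef.posSemidef_add hL (posDefSmul Matrix.PosDef.one hγ)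
  have hherm := hLγpd.isHermitian
  -- Spectral decomposition
  set U : Matrix (Fin N) (Fin N) ℝ := (hherm.eigenvectorUnitary : Matrix (Fin N) (Fin N) ℝ)
    with hUdef
  set ev : Fin N → ℝ := hherm.eigenvalues with hevdef
  have hU1 : star U * U = 1 := Unitary.coe_star_mul_self hherm.eigenvectorUnitary
  have hU2 : U * star U = 1 := Unitary.coe_mul_star_self hherm.eigenvectorUnitary
  have hUunit : IsUnit U := isUnit_iff_exists.mpr ⟨star U, hU2, hU1⟩
  have hUinv : U⁻¹ = star U := Matrix.inv_eq_left_inv hU1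
  have hspec : Lγ = U * Matrix.diagonal ev * star U := by
    have := hherm.spectral_theorem
    simpa using this
  have hevpos : ∀ i, 0 < ev i := fun i => hLγpd.eigenvalues_pos i
  -- conjugation form of exp
  have hexp : ∀ c : ℝ, NormedSpace.exp (c • Lγ)
      = U * Matrix.diagonal (fun i => Real.exp (c * ev i)) * star U := by
    intro c
    have h1 : c • Lγ = U * (c • Matrix.diagonal ev) * U⁻¹ := by
      rw [hUinv, hspec]
      rw [Matrix.mul_smul, Matrix.smul_mul]
    rw [h1, Matrix.exp_conj _ _ hUunit, hUinv]
    congr 1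
    congr 1
    rw [← Matrix.diagonal_smul, Matrix.exp_diagonal]
    congr 1
    rw [Pi.exp_def]
    funext i
    simp [Real.exp_eq_exp_ℝ]
  -- conjugated multiplication
  have hconjmul : ∀ A B : Matrix (Fin N) (Fin N) ℝ,
      (U * A * star U) * (U * B * star U) = U * (A * B) * star U := by
    intro A B
    simp only [Matrix.mul_assoc]
    rw [← Matrix.mul_assoc (star U) U (B * star U), hU1, Matrix.one_mul]
  have hDinv : Matrix.diagonal ev * Matrix.diagonal (fun i => (ev i)⁻¹) = 1 := by
    have hfun : (fun i => ev i * (ev i)⁻¹) = fun _ => (1:ℝ) :=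
      funext fun i => mul_inv_cancel₀ (ne_of_gt (hevpos i))
    rw [Matrix.diagonal_mul_diagonal, hfun, Matrix.diagonal_one]
  -- Lγ inverse
  have hLγinv : Lγ⁻¹ = U * Matrix.diagonal (fun i => (ev i)⁻¹) * star U := by
    apply Matrix.inv_eq_right_inv
    rw [hspec, hconjmul, hDinv, Matrix.mul_one, hU2]
  -- Sig as a conjugated diagonal
  have hSigdiag : Sig = U * Matrix.diagonal
      (fun i => σ ^ 2 * ((1 - Real.exp (-(2 * cbar) * ev i)) * (ev i)⁻¹)) * star U := by
    set E : Matrix (Fin N) (Fin N) ℝ :=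
      Matrix.diagonal (fun i => Real.exp (-(2 * cbar) * ev i)) with hE
    have h1E : U * (1 - E) * star U = 1 - U * E * star U := by
      rw [Matrix.mul_sub, Matrix.mul_one, Matrix.sub_mul, hU2]
    have hsmul : ∀ A : Matrix (Fin N) (Fin N) ℝ,
        U * (σ ^ 2 • A) * star U = σ ^ 2 • (U * A * star U) := by
      intro A
      rw [Matrix.mul_smul, Matrix.smul_mul]
    rw [hSig, hexp, hLγinv, ← h1E, hconjmul, ← hsmul]
    congr 1
    congr 1
    have hsubd : (1 : Matrix (Fin N) (Fin N) ℝ) - E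
        = Matrix.diagonal (fun i => 1 - Real.exp (-(2 * cbar) * ev i)) := by
      rw [hE, ← Matrix.diagonal_sub]
      congr 1
    rw [hsubd, Matrix.diagonal_mul_diagonal, ← Matrix.diagonal_smul]
    congr 1
  -- Sig is positive definite
  have hSigpd : Sig.PosDef := by
    rw [hSigdiag]
    have hdiag : (Matrix.diagonal
        (fun i => σ ^ 2 * ((1 - Real.exp (-(2 * cbar) * ev i)) * (ev i)⁻¹))).PosDef := by
      refine Matrix.PosDef.diagonal fun i => ?_
      have h1 : Real.exp (-(2 * cbar) * ev i) < 1 := by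
        rw [Real.exp_lt_one_iff]
        have := hevpos i
        nlinarith
      have h2 : (0:ℝ) < (ev i)⁻¹ := inv_pos.mpr (hevpos i)
      have h3 : (0:ℝ) < 1 - Real.exp (-(2 * cbar) * ev i) := by linarith
      positivity
    have hstar : IsUnit (star U) := isUnit_iff_exists.mpr ⟨U, hU1, hU2⟩
    have := posDefConj hdiag hstar
    have hT : (star U)ᵀ = U := by
      rw [Matrix.star_eq_conjTranspose, Matrix.conjTranspose_eq_transpose_of_trivial,
        Matrix.transpose_transpose]
    rwa [hT] at this
  have hSinvpd : Sig⁻¹.PosDef := hSigpd.inv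
  -- H is invertible and symmetric
  have hHunit : IsUnit H := by rw [hH]; exact Matrix.isUnit_exp _
  have hLγT : Lγᵀ = Lγ := by
    rw [← Matrix.conjTranspose_eq_transpose_of_trivial]
    exact hherm.eq
  have hHsymm : Hᵀ = H := by
    rw [hH, ← Matrix.exp_transpose]
    congr 1
    rw [Matrix.transpose_smul, hLγT]
  -- the matrix M
  set M := Hᵀ * Sig⁻¹ * H + α • L with hMdef
  have hMpd : M.PosDef := by
    have h1 : (Hᵀ * Sig⁻¹ * H).PosDef := posDefConj hSinvpd hHunit
    exact h1.add_posSemidef (posSemidefSmul hL hα)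
  have hMunit : IsUnit M := hMpd.isUnit
  have hMs : Mᵀ = M := by
    rw [← Matrix.conjTranspose_eq_transpose_of_trivial]
    exact hMpd.isHermitian.eq
  refine ⟨hMpd, hMunit, fun xt x hne => ?_⟩
  have hdet : IsUnit M.det := (Matrix.isUnit_iff_isUnit_det M).mp hMunit
  set S := Sig⁻¹ with hSdef
  have hSsym : Sᵀ = S := by
    rw [← Matrix.conjTranspose_eq_transpose_of_trivial]
    exact hSinvpd.isHermitian.eq
  set b : Fin N → ℝ := (Hᵀ * S) *ᵥ xt with hbdef
  set xhat : Fin N → ℝ := ((M⁻¹ * Hᵀ * S)) *ᵥ xt with hxhatdef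
  have hMxhat : M *ᵥ xhat = b := by
    rw [hxhatdef, hbdef, Matrix.mulVec_mulVec]
    congr 1
    rw [Matrix.mul_assoc M⁻¹ Hᵀ S, ← Matrix.mul_assoc M M⁻¹ (Hᵀ * S),
      Matrix.mul_nonsing_inv M hdet, Matrix.one_mul]
  -- expansion of F
  have hFexp : ∀ z : Fin N → ℝ, F xt z
      = xt ⬝ᵥ (S *ᵥ xt) + (z ⬝ᵥ (M *ᵥ z) - 2 * (b ⬝ᵥ z)) := by
    intro z
    rw [hF]
    have e1 : S *ᵥ (xt - H *ᵥ z) = S *ᵥ xt - (S * H) *ᵥ z := by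
      rw [Matrix.mulVec_sub, Matrix.mulVec_mulVec]
    have e2 : xt ⬝ᵥ ((S * H) *ᵥ z) = b ⬝ᵥ z := by
      have := mulVecDot (S * H)ᵀ xt z
      rw [Matrix.transpose_transpose] at this
      rw [← this, Matrix.transpose_mul, hSsym, hbdef]
    have e3 : (H *ᵥ z) ⬝ᵥ (S *ᵥ xt) = b ⬝ᵥ z := by
      rw [mulVecDot H z (S *ᵥ xt), Matrix.mulVec_mulVec, hbdef, dotProduct_comm]
    have e4 : (H *ᵥ z) ⬝ᵥ ((S * H) *ᵥ z) = z ⬝ᵥ ((Hᵀ * S * H) *ᵥ z) := by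
      rw [mulVecDot H z ((S * H) *ᵥ z), Matrix.mulVec_mulVec, ← Matrix.mul_assoc]
    rw [e1, sub_dotProduct, dotProduct_sub, dotProduct_sub, e2, e3, e4]
    have e5 : z ⬝ᵥ (M *ᵥ z) = z ⬝ᵥ ((Hᵀ * S * H) *ᵥ z) + α * (z ⬝ᵥ (L *ᵥ z)) := by
      rw [hMdef, Matrix.add_mulVec, dotProduct_add, Matrix.smul_mulVec,
        dotProduct_smul]
      simp [smul_eq_mul]
    rw [e5]
    ring
  rw [hFexp, hFexp]
  have := quadMin hMpd hMs b x xhat hMxhat hne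
  linarith
end

section
/- Let L be a real symmetric positive semidefinite N×N matrix with orthogonal eigendecomposition L = V·Λ·Vᵀ (V orthogonal, Λ = diag(λ₁,…,λ_N) with λ_i ≥ 0), let γ > 0, L_γ = L + γI, c̄ > 0, σ > 0, α ≥ 0, and set H = exp(−c̄·L_γ) and Σ = σ²·(I − exp(−2c̄·L_γ))·L_γ⁻¹. Then the estimator matrix h(L) = (Hᵀ·Σ⁻¹·H + α·L)⁻¹·Hᵀ·Σ⁻¹ equals V·D·Vᵀ, where D is the diagonal matrix with entries D_ii = e^{(λ_i+γ)·c̄} / (1 + α·σ²·(λ_i/(λ_i+γ))·(e^{2(λ_i+γ)·c̄} − 1)). -/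
open Matrix

section AuxDenoising

variable {N : ℕ} (V : Matrix (Fin N) (Fin N) ℝ)

lemma aux_conj_mul (h : Vᵀ * V = 1) (A B : Matrix (Fin N) (Fin N) ℝ) :
    (V * A * Vᵀ) * (V * B * Vᵀ) = V * (A * B) * Vᵀ := by
  have : V * A * Vᵀ * (V * B * Vᵀ) = V * A * (Vᵀ * V) * B * Vᵀ := by
    noncomm_ring
  rw [this, h, mul_one, mul_assoc V A B]

lemma aux_conj_diag_inv (h1 : V * Vᵀ = 1) (h2 : Vᵀ * V = 1) (w : Fin N → ℝ)
    (hw : ∀ i, w i ≠ 0) :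
    (V * Matrix.diagonal w * Vᵀ)⁻¹ = V * Matrix.diagonal (fun i => (w i)⁻¹) * Vᵀ := by
  apply Matrix.inv_eq_right_inv
  rw [aux_conj_mul V h2, Matrix.diagonal_mul_diagonal]
  have : (fun i => w i * (w i)⁻¹) = fun _ => (1:ℝ) := by
    funext i; exact mul_inv_cancel₀ (hw i)
  rw [this, Matrix.diagonal_one, mul_one, h1]

lemma aux_conj_exp (h1 : V * Vᵀ = 1) (w : Fin N → ℝ) :
    NormedSpace.exp (V * Matrix.diagonal w * Vᵀ) =
      V * Matrix.diagonal (fun i => Real.exp (w i)) * Vᵀ := by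
  have hVinv : V⁻¹ = Vᵀ := Matrix.inv_eq_right_inv h1
  have hVu : IsUnit V := by
    apply (Matrix.isUnit_iff_isUnit_det V).mpr
    exact IsUnit.of_mul_eq_one Vᵀ.det (by rw [← Matrix.det_mul, h1, Matrix.det_one])
  rw [← hVinv, Matrix.exp_conj V _ hVu, Matrix.exp_diagonal]
  simp only [Pi.exp_def, Real.exp_eq_exp_ℝ]

lemma aux_conj_sub (A B : Matrix (Fin N) (Fin N) ℝ) :
    (V * A * Vᵀ) - (V * B * Vᵀ) = V * (A - B) * Vᵀ := by noncomm_ring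

lemma aux_conj_add (A B : Matrix (Fin N) (Fin N) ℝ) :
    (V * A * Vᵀ) + (V * B * Vᵀ) = V * (A + B) * Vᵀ := by noncomm_ring

lemma aux_conj_smul (c : ℝ) (A : Matrix (Fin N) (Fin N) ℝ) :
    c • (V * A * Vᵀ) = V * (c • A) * Vᵀ := by
  rw [mul_smul_comm, smul_mul_assoc]

lemma aux_conj_one (h1 : V * Vᵀ = 1) : (1 : Matrix (Fin N) (Fin N) ℝ) = V * 1 * Vᵀ := by
  rw [mul_one, h1]

lemma aux_smul_diag (c : ℝ) (v : Fin N → ℝ) :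
    c • Matrix.diagonal v = Matrix.diagonal (fun i => c * v i) := by
  rw [← Matrix.diagonal_smul]
  rfl

end AuxDenoising

lemma sig_entry_pos (x γ cbar σ : ℝ) (hx : 0 ≤ x) (hγ : 0 < γ) (hc : 0 < cbar) (hσ : 0 < σ) :
    0 < σ ^ 2 * ((1 - Real.exp (-(2 * cbar * (x + γ)))) * (x + γ)⁻¹) := by
  have hd : 0 < x + γ := by positivity
  have h1 : Real.exp (-(2 * cbar * (x + γ))) < 1 := by
    rw [Real.exp_lt_one_iff]
    have : 0 < 2 * cbar * (x + γ) := by positivity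
    linarith
  have h2 : 0 < 1 - Real.exp (-(2 * cbar * (x + γ))) := by linarith
  positivity

lemma g_entry_pos (x γ cbar σ α : ℝ) (hx : 0 ≤ x) (hγ : 0 < γ) (hc : 0 < cbar)
    (hσ : 0 < σ) (hα : 0 ≤ α) :
    0 < Real.exp (-(cbar * (x + γ))) *
        (σ ^ 2 * ((1 - Real.exp (-(2 * cbar * (x + γ)))) * (x + γ)⁻¹))⁻¹ *
        Real.exp (-(cbar * (x + γ))) + α * x := by
  have h1 := sig_entry_pos x γ cbar σ hx hγ hc hσ
  have h2 : 0 < Real.exp (-(cbar * (x + γ))) := Real.exp_pos _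
  have h3 : 0 < Real.exp (-(cbar * (x + γ))) *
      (σ ^ 2 * ((1 - Real.exp (-(2 * cbar * (x + γ)))) * (x + γ)⁻¹))⁻¹ *
      Real.exp (-(cbar * (x + γ))) := by positivity
  nlinarith

lemma scalar_entry (x γ cbar σ α d e s : ℝ) (hx : 0 ≤ x) (hγ : 0 < γ) (hc : 0 < cbar)
    (hσ : 0 < σ) (hα : 0 ≤ α) (hd : d = x + γ)
    (he : e = Real.exp (-(cbar * d)))
    (hs : s = σ ^ 2 * ((1 - Real.exp (-(2 * cbar * d))) * d⁻¹)) :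
    (e * s⁻¹ * e + α * x)⁻¹ * e * s⁻¹ =
      Real.exp ((x + γ) * cbar) /
        (1 + α * σ ^ 2 * (x / (x + γ)) * (Real.exp (2 * (x + γ) * cbar) - 1)) := by
  rw [← hd]
  have hd0 : 0 < d := by rw [hd]; positivity
  set E := Real.exp (cbar * d) with hE
  have hE0 : 0 < E := Real.exp_pos _
  have hE1 : 1 < E := Real.one_lt_exp_iff.mpr (by positivity)
  have he' : e = E⁻¹ := by rw [he, hE, ← Real.exp_neg]
  have hexp2 : Real.exp (-(2 * cbar * d)) = (E ^ 2)⁻¹ := by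
    rw [hE, sq, ← Real.exp_add, ← Real.exp_neg]; ring_nf
  have hexp2' : Real.exp (2 * d * cbar) = E ^ 2 := by
    rw [hE, sq, ← Real.exp_add]; ring_nf
  have hexp1 : Real.exp (d * cbar) = E := by rw [hE, mul_comm]
  have hE2 : (1:ℝ) < E ^ 2 := by nlinarith
  have hinv1 : (E ^ 2)⁻¹ < 1 := by rw [inv_lt_one_iff₀]; right; exact hE2
  set u : ℝ := 1 - (E ^ 2)⁻¹ with hu
  have hu0 : 0 < u := by rw [hu]; linarith
  have hs' : s = σ ^ 2 * (u * d⁻¹) := by rw [hs, hexp2]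
  have hEu : E ^ 2 - 1 = E ^ 2 * u := by rw [hu]; field_simp
  rw [hexp1, hexp2', he', hs', hEu]
  have hgrw : E⁻¹ * (σ ^ 2 * (u * d⁻¹))⁻¹ * E⁻¹ + α * x =
      (d + α * x * σ ^ 2 * u * E ^ 2) / (σ ^ 2 * u * E ^ 2) := by
    field_simp
  have hnum : 0 < d + α * x * σ ^ 2 * u * E ^ 2 := by positivity
  have hden : 0 < 1 + α * σ ^ 2 * (x / d) * (E ^ 2 * u) := by positivity
  rw [hgrw, inv_div]
  field_simp [hnum.ne', hden.ne']

/-- Let `L` be a real symmetric positive semidefinite `N×N` matrix with orthogonal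
eigendecomposition `L = V·Λ·Vᵀ` (`V` orthogonal, `Λ = diag(λ₁,…,λ_N)` with `λ_i ≥ 0`), let
`γ > 0`, `L_γ = L + γI`, `c̄ > 0`, `σ > 0`, `α ≥ 0`, and set `H = exp(−c̄·L_γ)` and
`Σ = σ²·(I − exp(−2c̄·L_γ))·L_γ⁻¹`. Then the estimator matrix
`h(L) = (Hᵀ·Σ⁻¹·H + α·L)⁻¹·Hᵀ·Σ⁻¹` equals `V·D·Vᵀ`, where `D` is the diagonal matrix with
entries `D_ii = e^{(λ_i+γ)·c̄} / (1 + α·σ²·(λ_i/(λ_i+γ))·(e^{2(λ_i+γ)·c̄} − 1))`. -/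
theorem denoising_filter_frequency_response
    (N : ℕ) (hN : 1 ≤ N) (L V Λm : Matrix (Fin N) (Fin N) ℝ) (hL : L.PosSemidef)
    (lam : Fin N → ℝ) (hlam : ∀ i, 0 ≤ lam i) (hΛ : Λm = Matrix.diagonal lam)
    (hV : V * Vᵀ = 1 ∧ Vᵀ * V = 1) (hdec : L = V * Λm * Vᵀ)
    (γ cbar σ α : ℝ) (hγ : 0 < γ) (hcbar : 0 < cbar) (hσ : 0 < σ) (hα : 0 ≤ α)
    (Lγ H Sig : Matrix (Fin N) (Fin N) ℝ) (hLγ : Lγ = L + γ • 1)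
    (hH : H = NormedSpace.exp ((-cbar) • Lγ))
    (hSig : Sig = σ ^ 2 • ((1 - NormedSpace.exp ((-(2 * cbar)) • Lγ)) * Lγ⁻¹)) :
    (Hᵀ * Sig⁻¹ * H + α • L)⁻¹ * Hᵀ * Sig⁻¹ =
      V * Matrix.diagonal (fun i =>
        Real.exp ((lam i + γ) * cbar) /
          (1 + α * σ ^ 2 * (lam i / (lam i + γ))
            * (Real.exp (2 * (lam i + γ) * cbar) - 1))) * Vᵀ := by
  obtain ⟨hVVt, hVtV⟩ := hV
  set d : Fin N → ℝ := fun i => lam i + γ with hdfun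
  have hdpos : ∀ i, 0 < d i := by
    intro i; have := hlam i; simp only [hdfun]; positivity
  -- Lγ as a conjugated diagonal
  have hdiag : Matrix.diagonal lam + γ • (1 : Matrix (Fin N) (Fin N) ℝ) =
      Matrix.diagonal d := by
    ext i j
    rcases eq_or_ne i j with h | h
    · subst h; simp [hdfun]
    · simp [Matrix.diagonal_apply_ne _ h, Matrix.one_apply_ne h]
  have hLγ' : Lγ = V * Matrix.diagonal d * Vᵀ := by
    rw [hLγ, hdec, hΛ,
      show γ • (1 : Matrix (Fin N) (Fin N) ℝ) = V * (γ • 1) * Vᵀ by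
        rw [← aux_conj_smul, ← aux_conj_one V hVVt],
      aux_conj_add, hdiag]
  -- H
  have hsm1 : (-cbar) • Lγ = V * Matrix.diagonal (fun i => -cbar * d i) * Vᵀ := by
    rw [hLγ', aux_conj_smul, aux_smul_diag]
  have hH' : H = V * Matrix.diagonal (fun i => Real.exp (-cbar * d i)) * Vᵀ := by
    rw [hH, hsm1, aux_conj_exp V hVVt]
  -- exp(-(2c)Lγ)
  have hsm2 : (-(2 * cbar)) • Lγ = V * Matrix.diagonal (fun i => -(2 * cbar) * d i) * Vᵀ := by
    rw [hLγ', aux_conj_smul, aux_smul_diag]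
  have hE2 : NormedSpace.exp ((-(2 * cbar)) • Lγ) =
      V * Matrix.diagonal (fun i => Real.exp (-(2 * cbar) * d i)) * Vᵀ := by
    rw [hsm2, aux_conj_exp V hVVt]
  -- Lγ⁻¹
  have hLγi : Lγ⁻¹ = V * Matrix.diagonal (fun i => (d i)⁻¹) * Vᵀ := by
    rw [hLγ']; exact aux_conj_diag_inv V hVVt hVtV d (fun i => (hdpos i).ne')
  -- Sig
  have hSig' : Sig = V * Matrix.diagonal
      (fun i => σ ^ 2 * ((1 - Real.exp (-(2 * cbar) * d i)) * (d i)⁻¹)) * Vᵀ := by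
    rw [hSig, hE2, hLγi, aux_conj_one V hVVt, aux_conj_sub, aux_conj_mul V hVtV,
      aux_conj_smul]
    congr 2
    have h1 : (1 : Matrix (Fin N) (Fin N) ℝ) -
        Matrix.diagonal (fun i => Real.exp (-(2 * cbar) * d i)) =
        Matrix.diagonal (fun i => 1 - Real.exp (-(2 * cbar) * d i)) := by
      ext i j
      rcases eq_or_ne i j with h | h
      · subst h; simp
      · simp [Matrix.diagonal_apply_ne _ h, Matrix.one_apply_ne h]
    rw [h1, Matrix.diagonal_mul_diagonal, aux_smul_diag]
  -- w2 nonzero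
  have hw2pos : ∀ i, 0 < σ ^ 2 * ((1 - Real.exp (-(2 * cbar) * d i)) * (d i)⁻¹) := by
    intro i
    have h := sig_entry_pos (lam i) γ cbar σ (hlam i) hγ hcbar hσ
    have he : σ ^ 2 * ((1 - Real.exp (-(2 * cbar) * d i)) * (d i)⁻¹) =
        σ ^ 2 * ((1 - Real.exp (-(2 * cbar * (lam i + γ)))) * (lam i + γ)⁻¹) := by
      simp only [hdfun]; ring_nf
    rw [he]; exact h
  have hSigi : Sig⁻¹ = V * Matrix.diagonal
      (fun i => (σ ^ 2 * ((1 - Real.exp (-(2 * cbar) * d i)) * (d i)⁻¹))⁻¹) * Vᵀ := by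
    rw [hSig']
    exact aux_conj_diag_inv V hVVt hVtV _ (fun i => (hw2pos i).ne')
  -- Hᵀ
  have hHt : Hᵀ = V * Matrix.diagonal (fun i => Real.exp (-cbar * d i)) * Vᵀ := by
    rw [hH', Matrix.transpose_mul, Matrix.transpose_mul, Matrix.transpose_transpose,
      Matrix.diagonal_transpose, Matrix.mul_assoc]
  -- the matrix to invert
  have hαL : α • L = V * Matrix.diagonal (fun i => α * lam i) * Vᵀ := by
    rw [hdec, hΛ, aux_conj_smul, aux_smul_diag]
  have hM : Hᵀ * Sig⁻¹ * H + α • L = V * Matrix.diagonal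
      (fun i => Real.exp (-cbar * d i) *
        (σ ^ 2 * ((1 - Real.exp (-(2 * cbar) * d i)) * (d i)⁻¹))⁻¹ *
        Real.exp (-cbar * d i) + α * lam i) * Vᵀ := by
    rw [hHt, hSigi, hH', hαL, aux_conj_mul V hVtV, aux_conj_mul V hVtV, aux_conj_add,
      Matrix.diagonal_mul_diagonal, Matrix.diagonal_mul_diagonal, Matrix.diagonal_add]
  have hgpos : ∀ i, 0 < Real.exp (-cbar * d i) *
      (σ ^ 2 * ((1 - Real.exp (-(2 * cbar) * d i)) * (d i)⁻¹))⁻¹ *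
      Real.exp (-cbar * d i) + α * lam i := by
    intro i
    have h := g_entry_pos (lam i) γ cbar σ α (hlam i) hγ hcbar hσ hα
    have he : Real.exp (-cbar * d i) *
        (σ ^ 2 * ((1 - Real.exp (-(2 * cbar) * d i)) * (d i)⁻¹))⁻¹ *
        Real.exp (-cbar * d i) + α * lam i =
        Real.exp (-(cbar * (lam i + γ))) *
        (σ ^ 2 * ((1 - Real.exp (-(2 * cbar * (lam i + γ)))) * (lam i + γ)⁻¹))⁻¹ *
        Real.exp (-(cbar * (lam i + γ))) + α * lam i := by
      simp only [hdfun]; ring_nf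
    rw [he]; exact h
  have hMi : (Hᵀ * Sig⁻¹ * H + α • L)⁻¹ = V * Matrix.diagonal
      (fun i => (Real.exp (-cbar * d i) *
        (σ ^ 2 * ((1 - Real.exp (-(2 * cbar) * d i)) * (d i)⁻¹))⁻¹ *
        Real.exp (-cbar * d i) + α * lam i)⁻¹) * Vᵀ := by
    rw [hM]
    exact aux_conj_diag_inv V hVVt hVtV _ (fun i => (hgpos i).ne')
  rw [hMi, hHt, hSigi, aux_conj_mul V hVtV, aux_conj_mul V hVtV,
    Matrix.diagonal_mul_diagonal, Matrix.diagonal_mul_diagonal]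
  congr 2
  apply congrArg
  funext i
  have key := scalar_entry (lam i) γ cbar σ α (d i)
    (Real.exp (-cbar * d i))
    (σ ^ 2 * ((1 - Real.exp (-(2 * cbar) * d i)) * (d i)⁻¹))
    (hlam i) hγ hcbar hσ hα (by simp [hdfun])
    (by simp only [hdfun]; ring_nf)
    (by simp only [hdfun]; ring_nf)
  exact key
end

section
/- Let L be a real symmetric positive semidefinite N×N matrix, γ > 0, L_γ = L + γI, and σ > 0, and for c̄ > 0 define Σ(c̄) = σ²·(I − exp(−2c̄·L_γ))·L_γ⁻¹. Then for all 0 < c̄₁ ≤ c̄₂, the matrix Σ(c̄₂) − Σ(c̄₁) is symmetric positive semidefinite; that is, the forward-process covariance is monotonically nondecreasing in the Loewner order as the accumulated drift grows. -/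
open Matrix

section Aux

variable {N : ℕ}

lemma diag_exp_aux (v : Fin N → ℝ) :
    NormedSpace.exp (diagonal v) = diagonal (fun i => Real.exp (v i)) := by
  rw [Matrix.exp_diagonal]
  funext i
  rw [Pi.exp_def, Real.exp_eq_exp_ℝ]

lemma conj_mul_aux (A B U : Matrix (Fin N) (Fin N) ℝ) (hU1 : star U * U = 1) :
    (U * A * star U) * (U * B * star U) = U * (A * B) * star U := by
  calc (U * A * star U) * (U * B * star U)
      = U * A * (star U * U) * B * star U := by noncomm_ring
    _ = U * (A * B) * star U := by rw [hU1]; noncomm_ring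

lemma exp_conj_diag_aux (v : Fin N → ℝ) (U : Matrix (Fin N) (Fin N) ℝ)
    (hU1 : star U * U = 1) (hU2 : U * star U = 1) (c : ℝ) :
    NormedSpace.exp (c • (U * diagonal v * star U))
      = U * diagonal (fun i => Real.exp (c * v i)) * star U := by
  have hUnit : IsUnit U := ⟨⟨U, star U, hU2, hU1⟩, rfl⟩
  have hinv : U⁻¹ = star U := inv_eq_right_inv hU2
  have h1 : c • (U * diagonal v * star U) = U * (diagonal (fun i => c * v i)) * U⁻¹ := by
    rw [hinv]
    rw [show diagonal (fun i => c * v i) = c • diagonal v by rw [← diagonal_smul]; rfl]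
    simp [Matrix.mul_smul, Matrix.smul_mul]
  rw [h1, Matrix.exp_conj U _ hUnit, diag_exp_aux, hinv]

end Aux

/-- Let `L` be a real symmetric positive semidefinite `N×N` matrix, `γ > 0`,
`L_γ = L + γI`, and `σ > 0`, and for `c̄ > 0` define
`Σ(c̄) = σ²·(I − exp(−2c̄·L_γ))·L_γ⁻¹`. Then for all `0 < c̄₁ ≤ c̄₂`, the matrix
`Σ(c̄₂) − Σ(c̄₁)` is symmetric positive semidefinite; that is, the forward-process covariance
is monotonically nondecreasing in the Loewner order as the accumulated drift grows. -/
theorem forward_covariance_loewner_monotone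
    (N : ℕ) (hN : 1 ≤ N) (L : Matrix (Fin N) (Fin N) ℝ) (hL : L.PosSemidef)
    (γ σ : ℝ) (hγ : 0 < γ) (hσ : 0 < σ)
    (Lγ : Matrix (Fin N) (Fin N) ℝ) (hLγ : Lγ = L + γ • 1)
    (Sig : ℝ → Matrix (Fin N) (Fin N) ℝ)
    (hSig : ∀ cbar, Sig cbar
        = σ ^ 2 • ((1 - NormedSpace.exp ((-(2 * cbar)) • Lγ)) * Lγ⁻¹)) :
    ∀ cbar₁ cbar₂ : ℝ, 0 < cbar₁ → cbar₁ ≤ cbar₂ →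
      (Sig cbar₂ - Sig cbar₁).PosSemidef := by
  intro c₁ c₂ hc₁ hc₁₂
  -- Lγ is positive definite
  have hPD : Lγ.PosDef := by
    rw [hLγ]
    refine Matrix.PosDef.posSemidef_add hL ?_
    have h1 : (γ • 1 : Matrix (Fin N) (Fin N) ℝ) = diagonal (fun _ => γ) :=
      Matrix.smul_one_eq_diagonal γ
    rw [h1]
    exact posDef_diagonal_iff.mpr fun _ => hγ
  have hH : Lγ.IsHermitian := hPD.isHermitian
  set U : Matrix (Fin N) (Fin N) ℝ := (hH.eigenvectorUnitary : Matrix (Fin N) (Fin N) ℝ)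
    with hUdef
  set v : Fin N → ℝ := hH.eigenvalues with hvdef
  have hvpos : ∀ i, 0 < v i := fun i => hPD.eigenvalues_pos i
  have hU1 : star U * U = 1 := Matrix.mem_unitaryGroup_iff'.mp hH.eigenvectorUnitary.2
  have hU2 : U * star U = 1 := Matrix.mem_unitaryGroup_iff.mp hH.eigenvectorUnitary.2
  have hspec : Lγ = U * diagonal v * star U := by
    have h := hH.spectral_theorem
    simpa using h
  -- exponential formula
  have hexp : ∀ c : ℝ, NormedSpace.exp ((-(2 * c)) • Lγ)
      = U * diagonal (fun i => Real.exp (-(2 * c) * v i)) * star U := by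
    intro c
    rw [hspec]
    exact exp_conj_diag_aux v U hU1 hU2 _
  -- inverse formula
  have hinv : Lγ⁻¹ = U * diagonal (fun i => (v i)⁻¹) * star U := by
    apply inv_eq_right_inv
    rw [hspec, conj_mul_aux _ _ _ hU1, diagonal_mul_diagonal]
    have h2 : (fun i => v i * (v i)⁻¹) = fun _ : Fin N => (1 : ℝ) := by
      funext i; exact mul_inv_cancel₀ (hvpos i).ne'
    rw [h2, diagonal_one, Matrix.mul_one, hU2]
  -- the difference as a conjugated diagonal
  set w : Fin N → ℝ := fun i =>
    σ ^ 2 * ((Real.exp (-(2 * c₁) * v i) - Real.exp (-(2 * c₂) * v i)) * (v i)⁻¹) with hwdef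
  have hdiff : Sig c₂ - Sig c₁ = U * diagonal w * star U := by
    rw [hSig, hSig, hexp, hexp, hinv, ← smul_sub]
    have h3 : (1 - U * diagonal (fun i => Real.exp (-(2 * c₂) * v i)) * star U)
          * (U * diagonal (fun i => (v i)⁻¹) * star U)
        - (1 - U * diagonal (fun i => Real.exp (-(2 * c₁) * v i)) * star U)
          * (U * diagonal (fun i => (v i)⁻¹) * star U)
        = (U * diagonal (fun i => Real.exp (-(2 * c₁) * v i)) * star U
            - U * diagonal (fun i => Real.exp (-(2 * c₂) * v i)) * star U)
          * (U * diagonal (fun i => (v i)⁻¹) * star U) := by noncomm_ring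
    rw [h3, Matrix.sub_mul, conj_mul_aux _ _ _ hU1, conj_mul_aux _ _ _ hU1,
      diagonal_mul_diagonal, diagonal_mul_diagonal]
    have h4 : U * diagonal (fun i => Real.exp (-(2 * c₁) * v i) * (v i)⁻¹) * star U
        - U * diagonal (fun i => Real.exp (-(2 * c₂) * v i) * (v i)⁻¹) * star U
        = U * (diagonal (fun i => Real.exp (-(2 * c₁) * v i) * (v i)⁻¹)
            - diagonal (fun i => Real.exp (-(2 * c₂) * v i) * (v i)⁻¹)) * star U := by
      noncomm_ring
    have h5 : diagonal w = σ ^ 2 • (diagonal (fun i => Real.exp (-(2 * c₁) * v i) * (v i)⁻¹)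
        - diagonal (fun i => Real.exp (-(2 * c₂) * v i) * (v i)⁻¹)) := by
      rw [diagonal_sub, ← diagonal_smul]
      refine congrArg diagonal ?_
      funext i
      simp only [Pi.smul_apply, Pi.sub_apply, smul_eq_mul, hwdef]
      ring
    rw [h4, h5, Matrix.mul_smul, Matrix.smul_mul]
  rw [hdiff]
  have hwpos : ∀ i, 0 ≤ w i := by
    intro i
    apply mul_nonneg (sq_nonneg σ)
    apply mul_nonneg _ (inv_nonneg.mpr (hvpos i).le)
    have : -(2 * c₂) * v i ≤ -(2 * c₁) * v i := by
      apply mul_le_mul_of_nonneg_right _ (hvpos i).le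
      nlinarith
    linarith [Real.exp_le_exp.mpr this]
  have hpsd : (diagonal w).PosSemidef := posSemidef_diagonal_iff.mpr hwpos
  have := hpsd.mul_mul_conjTranspose_same U
  simpa [Matrix.star_eq_conjTranspose] using this
end
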